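/- If linear orders L₀ and L₁ are each order-isomorphic to the linguage of a deterministic finite automaton over {0,1}, then so is their binary shuffle Ξ(L₀, L₁). -/

import Mathlib

/-- A deterministic finite automaton with a partial transition function. -/
structure PDFA (σ : Type) where
  /-- the (finite) set of states -/
  State : Type
  finState : Finite State
  /-- the start state -/
  start : State
  /-- the set of accept states -/
  accept : Set State
  /-- the partial transition function -/
  step : State → σ → Option State

namespace PDFA

variable {σ : Type} (M : PDFA σ)

/-- The extended (partial) transition function `δ̂`, reading the word left to right. -/
def run (q : M.State) (w : List σ) : Option M.State :=
  w.foldlM (fun q a => M.step q a) q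

/-- The language accepted by the automaton. -/
def lang : Set (List σ) := {w | ∃ q ∈ M.accept, M.run M.start w = some q}

end PDFA

/-- The inorder relation `<₂` on finite binary words: `x <₂ y` iff, writing
`x = w·x'`, `y = w·y'` with `w` the longest common prefix, either `x'` begins
with `0`(=`false`) or `y'` begins with `1`(=`true`). -/
def inlt : List Bool → List Bool → Prop
  | [], [] => False
  | [], b :: _ => b = true
  | a :: _, [] => a = false
  | a :: x, b :: y => (a = false ∧ b = true) ∨ (a = b ∧ inlt x y)

/-- `(L, r)` is order-isomorphic to the linguage `(L(M), <₂)` of some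
deterministic finite automaton `M` over `{0,1}`. -/
def IsLinguageOf (L : Type) (r : L → L → Prop) : Prop :=
  ∃ M : PDFA Bool, Nonempty (r ≃r fun x y : M.lang => inlt x.1 y.1)

/-- The two-element family of types `L₀, L₁` indexed by `Bool`. -/
def boolFam (L₀ L₁ : Type) : Bool → Type
  | false => L₀
  | true => L₁

/-- The corresponding family of relations. -/
def boolFamRel {L₀ L₁ : Type} (r₀ : L₀ → L₀ → Prop) (r₁ : L₁ → L₁ → Prop) :
    ∀ b, boolFam L₀ L₁ b → boolFam L₀ L₁ b → Prop
  | false => r₀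
  | true => r₁

/-!
Order the set of all binary words by `<₂` and colour each word by its last letter. This is a
countable dense order without endpoints in which both colour classes are dense, so a coloured
back-and-forth argument identifies `(ℚ, χ)` with it, and the shuffle becomes the sum of
`L_{last u}` over the words `u`. Encoding a pair `(u, w)` as `u` with every letter doubled,
followed by the marker `01` and then `w`, turns the lexicographic order on pairs into `<₂`. The
encoded words with `w` in the linguage of `M_{last u}` are recognised by an automaton that reads
doubled letters remembering the last one and, at the marker, hands over to that `M_i`.
-/

noncomputable section

namespace Order

variable {ι α β : Type*} [LinearOrder α] [LinearOrder β]

def IsDenseColoring (c : α → ι) : Prop :=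
  ∀ i (a b : α), a < b → ∃ m, a < m ∧ m < b ∧ c m = i

theorem IsDenseColoring.denselyOrdered {c : α → ι} (hc : IsDenseColoring c) (i : ι) :
    DenselyOrdered α :=
  ⟨fun a b h => let ⟨m, ham, hmb, _⟩ := hc i a b h; ⟨m, ham, hmb⟩⟩

theorem IsDenseColoring.exists_cmp_eq [NoMinOrder β] [NoMaxOrder β] [Nonempty β] {c : β → ι}
    (hc : IsDenseColoring c) (i : ι) (S : Finset β) {b : β} (hb : b ∉ S) :
    ∃ b', c b' = i ∧ ∀ s ∈ S, cmp s b' = cmp s b := by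
  have := hc.denselyOrdered i
  obtain ⟨m₀, hlo, hm₀⟩ := exists_between_finsets {s ∈ S | s < b} {b}
    (fun s hs _ hb' => (Finset.mem_singleton.1 hb') ▸ (Finset.mem_filter.1 hs).2)
  obtain ⟨m, hm₀m, hmb, hcm⟩ := hc i m₀ b (hm₀ b (Finset.mem_singleton_self b))
  refine ⟨m, hcm, fun s hs => ?_⟩
  rcases lt_trichotomy s b with hsb | rfl | hbs
  · rw [(cmp_eq_lt_iff _ _).2 hsb, cmp_eq_lt_iff]
    exact (hlo s (Finset.mem_filter.2 ⟨hs, hsb⟩)).trans hm₀m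
  · exact absurd hs hb
  · rw [(cmp_eq_gt_iff _ _).2 hbs, cmp_eq_gt_iff]
    exact hmb.trans hbs

variable (cα : α → ι) (cβ : β → ι)

def ColoredPartialIso : Type _ :=
  { f : PartialIso α β // ∀ p ∈ f.val, cβ p.2 = cα p.1 }

namespace ColoredPartialIso

instance : Preorder (ColoredPartialIso cα cβ) := Subtype.preorder _

instance : Inhabited (ColoredPartialIso cα cβ) :=
  ⟨⟨default, fun _ h => (Finset.notMem_empty _ h).elim⟩⟩

variable {cα cβ}

theorem exists_across [NoMinOrder β] [NoMaxOrder β] [Nonempty β] (hβ : IsDenseColoring cβ)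
    (f : ColoredPartialIso cα cβ) (a : α) :
    ∃ b, cβ b = cα a ∧ ∀ p ∈ f.1.1, cmp p.1 a = cmp p.2 b := by
  by_cases h : ∃ b, (a, b) ∈ f.1.1
  · obtain ⟨b, hb⟩ := h
    exact ⟨b, f.2 _ hb, fun p hp => f.1.2 _ hp _ hb⟩
  have := hβ.denselyOrdered (cα a)
  obtain ⟨b, hb⟩ := f.1.exists_across a
  have hbS : b ∉ f.1.1.image Prod.snd := by
    intro hb'
    obtain ⟨p, hp, rfl⟩ := Finset.mem_image.1 hb'
    have hpa : p.1 = a := by simpa using hb p hp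
    exact h ⟨p.2, hpa ▸ hp⟩
  obtain ⟨b', hcb', hb'⟩ := hβ.exists_cmp_eq (cα a) _ hbS
  exact ⟨b', hcb', fun p hp => (hb p hp).trans (hb' _ (Finset.mem_image_of_mem _ hp)).symm⟩

protected def comm (f : ColoredPartialIso cα cβ) : ColoredPartialIso cβ cα :=
  ⟨f.1.comm, by
    intro _ hq
    change _ ∈ f.1.1.image _ at hq
    obtain ⟨p, hp, rfl⟩ := Finset.mem_image.1 hq
    exact (f.2 p hp).symm⟩

def definedAtLeft [NoMinOrder β] [NoMaxOrder β] [Nonempty β] (hβ : IsDenseColoring cβ) (a : α) :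
    Cofinal (ColoredPartialIso cα cβ) where
  carrier := {f | ∃ b, (a, b) ∈ f.1.1}
  isCofinal f := by
    obtain ⟨b, hcb, hab⟩ := exists_across hβ f a
    refine ⟨⟨⟨insert (a, b) f.1.1, fun p hp q hq => ?_⟩, fun p hp => ?_⟩,
      ⟨b, Finset.mem_insert_self _ _⟩, Finset.subset_insert _ _⟩
    · rw [Finset.mem_insert] at hp hq
      rcases hp with rfl | hp <;> rcases hq with rfl | hq
      · simp only [cmp_self_eq_eq]
      · rw [cmp_eq_cmp_symm]
        exact hab _ hq
      · exact hab _ hp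
      · exact f.1.2 _ hp _ hq
    · rcases Finset.mem_insert.1 hp with rfl | hp
      · exact hcb
      · exact f.2 _ hp

def definedAtRight [NoMinOrder α] [NoMaxOrder α] [Nonempty α] (hα : IsDenseColoring cα) (b : β) :
    Cofinal (ColoredPartialIso cα cβ) where
  carrier := {f | ∃ a, (a, b) ∈ f.1.1}
  isCofinal f := by
    obtain ⟨f', ⟨a, ha⟩, hf⟩ := (definedAtLeft hα b).isCofinal f.comm
    refine ⟨f'.comm, ⟨a, Finset.mem_image.2 ⟨(b, a), ha, rfl⟩⟩, fun p hp => ?_⟩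
    exact Finset.mem_image.2 ⟨p.swap, hf (Finset.mem_image_of_mem _ hp), rfl⟩

end ColoredPartialIso

open ColoredPartialIso in
theorem exists_orderIso_of_isDenseColoring [Countable α] [NoMinOrder α] [NoMaxOrder α] [Nonempty α]
    [Countable β] [NoMinOrder β] [NoMaxOrder β] [Nonempty β] {cα : α → ι} {cβ : β → ι}
    (hα : IsDenseColoring cα) (hβ : IsDenseColoring cβ) :
    ∃ e : α ≃o β, ∀ a, cβ (e a) = cα a := by
  cases nonempty_encodable α
  cases nonempty_encodable β
  let cofinals : α ⊕ β → Cofinal (ColoredPartialIso cα cβ) :=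
    Sum.elim (definedAtLeft hβ) (definedAtRight hα)
  let ideal := idealOfCofinals default cofinals
  have hF (a : α) : ∃ b, ∃ f ∈ ideal, (a, b) ∈ f.1.1 :=
    let ⟨f, ⟨b, hb⟩, hf⟩ := cofinal_meets_idealOfCofinals default cofinals (Sum.inl a)
    ⟨b, f, hf, hb⟩
  have hG (b : β) : ∃ a, ∃ f ∈ ideal, (a, b) ∈ f.1.1 :=
    let ⟨f, ⟨a, ha⟩, hf⟩ := cofinal_meets_idealOfCofinals default cofinals (Sum.inr b)
    ⟨a, f, hf, ha⟩
  choose F hF using hF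
  choose G hG using hG
  refine ⟨OrderIso.ofCmpEqCmp F G fun a b => ?_, fun a => ?_⟩
  · obtain ⟨f, hf, ha⟩ := hF a
    obtain ⟨g, hg, hb⟩ := hG b
    obtain ⟨m, -, hfm, hgm⟩ := ideal.directed _ hf _ hg
    exact m.1.2 _ (hfm ha) _ (hgm hb)
  · obtain ⟨f, -, ha⟩ := hF a
    exact f.2 _ ha

end Order

end

def RelIso.sigmaLexCongr {ι κ : Type*} {α : ι → Type*} {β : κ → Type*} {r : ι → ι → Prop}
    {r' : κ → κ → Prop} {s : ∀ i, α i → α i → Prop} {s' : ∀ k, β k → β k → Prop}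
    (f : r ≃r r') (F : ∀ i, s i ≃r s' (f i)) : Sigma.Lex r s ≃r Sigma.Lex r' s' where
  toEquiv := Equiv.sigmaCongr f.toEquiv fun i => (F i).toEquiv
  map_rel_iff' {x y} := by
    obtain ⟨i, a⟩ := x
    obtain ⟨j, b⟩ := y
    change Sigma.Lex r' s' ⟨f i, F i a⟩ ⟨f j, F j b⟩ ↔ _
    constructor
    · rw [Sigma.lex_iff]
      rintro (h | ⟨h, hab⟩)
      · exact .left _ _ (f.map_rel_iff.1 h)
      · obtain rfl := f.injective h
        exact .right _ _ ((F i).map_rel_iff.1 hab)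
    · rintro (⟨a, b, h⟩ | ⟨a, b, h⟩)
      · exact .left _ _ (f.map_rel_iff.2 h)
      · exact .right _ _ ((F _).map_rel_iff.2 h)

theorem inlt_iff_append_true_lt : ∀ x y : List Bool, inlt x y ↔ x ++ [true] < y ++ [true]
  | [], [] => by simp [inlt]
  | [], b :: y => by cases y <;> simp [inlt, List.cons_lt_cons_iff, List.nil_lt_cons]
  | a :: x, [] => by cases a <;> simp [inlt, List.cons_lt_cons_iff]
  | a :: x, b :: y => by
    cases a <;> cases b <;> simp [inlt, List.cons_lt_cons_iff, inlt_iff_append_true_lt x y]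

theorem inlt_append_append_iff (p x y : List Bool) : inlt (p ++ x) (p ++ y) ↔ inlt x y := by
  induction p with
  | nil => rfl
  | cons a p ih => simp [inlt, ih]

theorem inlt_self_append_iff (u s : List Bool) : inlt u (u ++ s) ↔ inlt [] s := by
  simpa using inlt_append_append_iff u [] s

theorem inlt_append_self_iff (u s : List Bool) : inlt (u ++ s) u ↔ inlt s [] := by
  simpa using inlt_append_append_iff u s []

theorem inlt_append_left_of_not_prefix {u v : List Bool} (h : inlt u v) (hp : ¬ u <+: v)
    (z : List Bool) : inlt (u ++ z) v := by
  induction u generalizing v with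
  | nil => exact absurd List.nil_prefix hp
  | cons a u ih =>
    cases v with
    | nil => exact h
    | cons b v =>
      rcases h with h | ⟨rfl, h⟩
      · exact Or.inl h
      · exact Or.inr ⟨rfl, ih h (by simpa using hp)⟩

theorem exists_inlt_inlt_getLastD_eq (i : Bool) {u v : List Bool} (h : inlt u v) :
    ∃ m, inlt u m ∧ inlt m v ∧ m.getLastD false = i := by
  -- if `v` extends `u` (then by a `1`), go just left of `v`; otherwise just right of `u`
  by_cases hp : u <+: v
  · obtain ⟨s, rfl⟩ := hp
    refine ⟨u ++ s ++ [false, i], ?_, (inlt_append_self_iff _ _).2 rfl, by simp⟩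
    rw [List.append_assoc, inlt_self_append_iff]
    rw [inlt_self_append_iff] at h
    cases s with
    | nil => exact h.elim
    | cons b s => exact h
  · exact ⟨u ++ [true, i], (inlt_self_append_iff _ _).2 rfl,
      inlt_append_left_of_not_prefix h hp _, by simp⟩

def Inorder : Type := List Bool

namespace Inorder

instance : LinearOrder Inorder :=
  LinearOrder.lift' (fun x : List Bool => x ++ [true]) (List.append_left_injective [true])

theorem lt_iff_inlt {u v : Inorder} : u < v ↔ inlt u v := (inlt_iff_append_true_lt u v).symm

instance : Countable Inorder := inferInstanceAs (Countable (List Bool))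
instance : Nonempty Inorder := ⟨([] : List Bool)⟩

instance : NoMaxOrder Inorder :=
  ⟨fun u : List Bool =>
    ⟨(u ++ [true] : List Bool), lt_iff_inlt.2 <| (inlt_self_append_iff u _).2 rfl⟩⟩

instance : NoMinOrder Inorder :=
  ⟨fun u : List Bool =>
    ⟨(u ++ [false] : List Bool), lt_iff_inlt.2 <| (inlt_append_self_iff u _).2 rfl⟩⟩

def lastLetter (u : Inorder) : Bool := List.getLastD u false

theorem isDenseColoring_lastLetter : Order.IsDenseColoring lastLetter := fun i _ _ h => by
  simp only [lt_iff_inlt]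
  exact exists_inlt_inlt_getLastD_eq i (lt_iff_inlt.1 h)

end Inorder

namespace PDFA

variable {σ : Type} (M : PDFA σ)

@[simp]
theorem run_nil (q : M.State) : M.run q [] = some q := rfl

@[simp]
theorem run_cons (q : M.State) (a : σ) (w : List σ) :
    M.run q (a :: w) = (M.step q a).bind (M.run · w) := by
  simp [run, List.foldlM]

theorem mem_lang {w : List σ} : w ∈ M.lang ↔ ∃ q ∈ M.accept, M.run M.start w = some q := Iff.rfl

end PDFA

namespace Shuffle

def double : List Bool → List Bool
  | [] => []
  | b :: u => b :: b :: double u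

def encode (u w : List Bool) : List Bool := double u ++ false :: true :: w

theorem inlt_encode_iff {u v w w' : List Bool} :
    inlt (encode u w) (encode v w') ↔ inlt u v ∨ (u = v ∧ inlt w w') := by
  induction u generalizing v with
  | nil => cases v with
    | nil => simp [encode, double, inlt]
    | cons b v => cases b <;> simp [encode, double, inlt]
  | cons a u ih => cases v with
    | nil => cases a <;> simp [encode, double, inlt]
    | cons b v => cases a <;> cases b <;> simp_all [encode, double, inlt]

theorem encode_injective {u v w w' : List Bool} (h : encode u w = encode v w') :
    u = v ∧ w = w' := by
  induction u generalizing v with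
  | nil => cases v with
    | nil => simpa [encode, double] using h
    | cons b v => cases b <;> simp [encode, double] at h
  | cons a u ih => cases v with
    | nil => cases a <;> simp [encode, double] at h
    | cons b v =>
      simp only [encode, double, List.cons_append, List.cons.injEq] at h
      obtain ⟨rfl, -, h⟩ := h
      simpa using ih h

variable (M : Bool → PDFA Bool)

/-- A state `.inl (c, p)` reads the doubled letters of a node whose last letter so far is `c`,
`p` being the first letter of an unfinished pair; after the marker `01` the run continues in
`M c`, in the states `.inr ⟨c, q⟩`. -/
abbrev dfa : PDFA Bool where
  State := (Bool × Option Bool) ⊕ (Σ i, (M i).State)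
  finState := have := fun i => (M i).finState; inferInstance
  start := .inl (false, none)
  accept := {s | s.elim (fun _ => False) fun p => p.2 ∈ (M p.1).accept}
  step
    | .inl (c, none), a => some (.inl (c, some a))
    | .inl (_, some false), false => some (.inl (false, none))
    | .inl (_, some true), true => some (.inl (true, none))
    | .inl (c, some false), true => some (.inr ⟨c, (M c).start⟩)
    | .inl (_, some true), false => none
    | .inr ⟨i, q⟩, a => ((M i).step q a).map fun q' => .inr ⟨i, q'⟩

theorem run_inr (i : Bool) (q : (M i).State) (w : List Bool) :
    (dfa M).run (.inr ⟨i, q⟩) w = ((M i).run q w).map fun q' => .inr ⟨i, q'⟩ := by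
  induction w generalizing q with
  | nil => rfl
  | cons a w ih => cases h : (M i).step q a <;> simp [h, ih]

theorem run_double_append (c : Bool) (u x : List Bool) :
    (dfa M).run (.inl (c, none)) (double u ++ x) = (dfa M).run (.inl (u.getLastD c, none)) x := by
  induction u generalizing c with
  | nil => rfl
  | cons b u ih =>
    rw [List.getLastD_cons, ← ih b]
    cases b <;> rfl

theorem run_start_encode (u w : List Bool) :
    (dfa M).run (dfa M).start (encode u w) =
      ((M (u.getLastD false)).run (M _).start w).map fun q => .inr ⟨_, q⟩ := by
  rw [encode, run_double_append]
  exact run_inr M _ _ w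

theorem encode_mem_lang_iff (u w : List Bool) :
    encode u w ∈ (dfa M).lang ↔ w ∈ (M (u.getLastD false)).lang := by
  rw [PDFA.mem_lang, PDFA.mem_lang, run_start_encode]
  simp only [Option.map_eq_some_iff]
  constructor
  · rintro ⟨_, hq, q, hrun, rfl⟩
    exact ⟨q, hq, hrun⟩
  · rintro ⟨q, hq, hrun⟩
    exact ⟨_, hq, q, hrun, rfl⟩

theorem exists_eq_encode_of_run {x : List Bool} {c : Bool} {s : Σ i, (M i).State}
    (h : (dfa M).run (.inl (c, none)) x = some (Sum.inr s)) : ∃ u w, x = encode u w := by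
  induction x using List.twoStepInduction generalizing c with
  | nil => simp at h
  | singleton a => simp at h
  | cons_cons a b t ih _ =>
    cases a <;> cases b <;> simp at h
    · obtain ⟨u, w, rfl⟩ := ih h
      exact ⟨false :: u, w, rfl⟩
    · exact ⟨[], t, rfl⟩
    · obtain ⟨u, w, rfl⟩ := ih h
      exact ⟨true :: u, w, rfl⟩

theorem exists_eq_encode_of_mem_lang {x : List Bool} (hx : x ∈ (dfa M).lang) :
    ∃ u w, x = encode u w := by
  obtain ⟨s | s, hs, hrun⟩ := hx
  · exact hs.elim
  · exact exists_eq_encode_of_run M hrun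

noncomputable def relIso :
    Sigma.Lex (· < ·) (fun u : Inorder => fun x y : (M u.lastLetter).lang => inlt x.1 y.1) ≃r
      fun x y : (dfa M).lang => inlt x.1 y.1 where
  toEquiv := Equiv.ofBijective
    (fun p => ⟨encode p.1 p.2, (encode_mem_lang_iff M _ _).2 p.2.2⟩)
    ⟨fun ⟨u, w⟩ ⟨v, w'⟩ h => by
      obtain ⟨rfl, hw⟩ := encode_injective (congrArg Subtype.val h)
      exact Sigma.ext rfl (heq_of_eq (Subtype.ext hw)),
     fun ⟨x, hx⟩ => by
      obtain ⟨u, w, rfl⟩ := exists_eq_encode_of_mem_lang M hx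
      exact ⟨⟨u, w, (encode_mem_lang_iff M u w).1 hx⟩, rfl⟩⟩
  map_rel_iff' {p q} := by
    obtain ⟨u, w⟩ := p
    obtain ⟨v, w'⟩ := q
    refine inlt_encode_iff.trans ⟨?_, ?_⟩
    · rintro (h | ⟨rfl, h⟩)
      · exact .left _ _ (Inorder.lt_iff_inlt.2 h)
      · exact .right _ _ h
    · rintro (⟨_, _, h⟩ | ⟨_, _, h⟩)
      · exact .inl (Inorder.lt_iff_inlt.1 h)
      · exact .inr ⟨rfl, h⟩

end Shuffle

/-- If `L₀` and `L₁` are each order-isomorphic to the linguage of a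
DFA over `{0,1}`, then so is their binary shuffle `Ξ(L₀, L₁) = Σ_{q ∈ ℚ} L_{χ(q)}`,
where `χ : ℚ → {0,1}` is any coloring with both color classes dense in `ℚ`. -/
theorem isLinguage_shuffle₂ (L₀ L₁ : Type) (r₀ : L₀ → L₀ → Prop) (r₁ : L₁ → L₁ → Prop)
    (h₀ : IsLinguageOf L₀ r₀) (h₁ : IsLinguageOf L₁ r₁)
    (χ : ℚ → Bool) (hχ : ∀ i : Bool, ∀ a b : ℚ, a < b → ∃ q, a < q ∧ q < b ∧ χ q = i) :
    IsLinguageOf ((q : ℚ) × boolFam L₀ L₁ (χ q))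
      (Sigma.Lex (· < ·) (fun q => boolFamRel r₀ r₁ (χ q))) := by
  obtain ⟨M₀, ⟨e₀⟩⟩ := h₀
  obtain ⟨M₁, ⟨e₁⟩⟩ := h₁
  obtain ⟨φ, hφ⟩ :=
    Order.exists_orderIso_of_isDenseColoring (β := Inorder) hχ Inorder.isDenseColoring_lastLetter
  obtain rfl : (fun q => (φ q).lastLetter) = χ := funext hφ
  let M : Bool → PDFA Bool := fun i => bif i then M₁ else M₀
  let e : ∀ i, boolFamRel r₀ r₁ i ≃r fun x y : (M i).lang => inlt x.1 y.1
    | false => e₀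
    | true => e₁
  exact ⟨Shuffle.dfa M,
    ⟨(RelIso.sigmaLexCongr φ.toRelIsoLT fun q => e _).trans (Shuffle.relIso M)⟩⟩
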